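/- arXiv:2310.15843 — 2 statements merged into one kernel-verified Lean document; each statement's English description precedes it below -/
import Mathlib

section
/- Let Ω = {x ∈ R^d : r−w ≤ |x| ≤ r} be a spherical shell with 0 < w ≤ r, and let H be any affine hyperplane of dimension d−1 in R^d with nonempty intersection with Ω. Then Ω ∩ H is, within H ≅ R^{d−1}, either a (d−1)-dimensional spherical shell of outer radius r_* and thickness w_*, a ball (viewed as a shell with r_* = w_*), or a single point, and in all cases r_* · w_* ≤ 2rw. -/
open MeasureTheory Metric

noncomputable def simplexVol (d : ℕ) (A : Fin (d+1) → EuclideanSpace ℝ (Fin d)) : ℝ :=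
  |Matrix.det (Matrix.of fun i j : Fin d => (A i.succ - A 0) j)| / (Nat.factorial d)

def IsReciprocal (d : ℕ) (A B : Fin (d+1) → EuclideanSpace ℝ (Fin d)) : Prop :=
  ∀ e : (Fin (d+1) ⊕ Fin (d+1)) ≃ (Fin (d+1) ⊕ Fin (d+1)),
    simplexVol d (Sum.elim A B ∘ e ∘ Sum.inl) * simplexVol d (Sum.elim A B ∘ e ∘ Sum.inr)
      ≤ simplexVol d A * simplexVol d B

/-- The standard surface measure on the unit sphere `S^{d-1}` in `ℝ^d`, realized as the
`(d-1)`-dimensional Hausdorff measure restricted to the sphere. -/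
noncomputable def sphereMeasure (d : ℕ) : Measure (EuclideanSpace ℝ (Fin d)) :=
  (MeasureTheory.Measure.hausdorffMeasure ((d : ℝ) - 1)).restrict
    (sphere (0 : EuclideanSpace ℝ (Fin d)) 1)

/-- The adjoint Radon transform. -/
noncomputable def adjRadon (d : ℕ) (G : ℝ × EuclideanSpace ℝ (Fin d) → ℝ)
    (x : EuclideanSpace ℝ (Fin d)) : ℝ :=
  ∫ ω, G ((inner ℝ x ω : ℝ), ω) ∂(sphereMeasure d)

/-- The product measure on `ℝ × S^{d-1}`. -/
noncomputable def radonMeasure (d : ℕ) : Measure (ℝ × EuclideanSpace ℝ (Fin d)) :=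
  (volume : Measure ℝ).prod (sphereMeasure d)

open EuclideanGeometry

/-! The centre `c` of the sliced shell is the foot of the perpendicular from the centre of the
shell to `H`, at distance `h` from it. By Pythagoras `‖y‖² = |y - c|² + h²` on `H`, so the slice
is the shell in `H` about `c` with radii `√((r - w)² - h²) ≤ √(r² - h²) =: r_*`, and
`r_* w_* ≤ r_*² - (r_* - w_*)² ≤ r² - (r - w)² ≤ 2 r w`. -/

def closedAnnulus {X : Type*} [PseudoMetricSpace X] (c : X) (a b : ℝ) : Set X :=
  {x | a ≤ dist x c ∧ dist x c ≤ b}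

namespace Real

variable {a b n t h : ℝ}

theorem le_iff_sqrt_sq_sub_sq_le (ha : 0 ≤ a) (hn : 0 ≤ n) (ht : 0 ≤ t)
    (hpyth : n ^ 2 = t ^ 2 + h ^ 2) : a ≤ n ↔ √(a ^ 2 - h ^ 2) ≤ t := by
  rw [sqrt_le_left ht, ← sq_le_sq₀ ha hn]
  constructor <;> intro <;> linarith

theorem le_iff_le_sqrt_sq_sub_sq (hb : 0 ≤ b) (hn : 0 ≤ n) (ht : 0 ≤ t)
    (hhb : h ^ 2 ≤ b ^ 2) (hpyth : n ^ 2 = t ^ 2 + h ^ 2) :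
    n ≤ b ↔ t ≤ √(b ^ 2 - h ^ 2) := by
  rw [le_sqrt ht (sub_nonneg.2 hhb), ← sq_le_sq₀ hn hb]
  constructor <;> intro <;> linarith

theorem sqrt_sq_sub_sq_le_sqrt_sq_sub_sq (ha : 0 ≤ a) (hab : a ≤ b) :
    √(a ^ 2 - h ^ 2) ≤ √(b ^ 2 - h ^ 2) :=
  sqrt_le_sqrt (by nlinarith)

theorem sqrt_mul_sub_sqrt_le (ha : 0 ≤ a) (hab : a ≤ b) (hhb : h ^ 2 ≤ b ^ 2) :
    √(b ^ 2 - h ^ 2) * (√(b ^ 2 - h ^ 2) - √(a ^ 2 - h ^ 2)) ≤ b ^ 2 - a ^ 2 := by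
  have hy : 0 ≤ √(a ^ 2 - h ^ 2) := sqrt_nonneg _
  have hyx := sqrt_sq_sub_sq_le_sqrt_sq_sub_sq (h := h) ha hab
  have hx2 : √(b ^ 2 - h ^ 2) ^ 2 = b ^ 2 - h ^ 2 := sq_sqrt (sub_nonneg.2 hhb)
  have hy2 : a ^ 2 - h ^ 2 ≤ √(a ^ 2 - h ^ 2) ^ 2 := sq_sqrt' ▸ le_max_left _ _
  nlinarith

end Real

namespace EuclideanGeometry

variable {V P : Type*} [NormedAddCommGroup V] [InnerProductSpace ℝ V] [MetricSpace P]
  [NormedAddTorsor V P] {s : AffineSubspace ℝ P} [Nonempty s]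
  [s.direction.HasOrthogonalProjection]

theorem dist_sq_eq_dist_orthogonalProjection_sq_add_sq (p : P) {y : P} (hy : y ∈ s) :
    dist y p ^ 2 =
      dist y (orthogonalProjection s p) ^ 2 + dist p (orthogonalProjection s p) ^ 2 := by
  simpa only [sq] using
    dist_sq_eq_dist_orthogonalProjection_sq_add_dist_orthogonalProjection_sq p hy

theorem dist_orthogonalProjection_le_dist_of_mem (p : P) {y : P} (hy : y ∈ s) :
    dist p (orthogonalProjection s p) ≤ dist p y :=
  (dist_orthogonalProjection_eq_infDist s p).trans_le (infDist_le_dist_of_mem hy)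

theorem closedAnnulus_inter_affineSubspace (p : P) {a b : ℝ} (ha : 0 ≤ a)
    (hb : dist p (orthogonalProjection s p) ≤ b) :
    closedAnnulus p a b ∩ s =
      closedAnnulus (orthogonalProjection s p : P)
        √(a ^ 2 - dist p (orthogonalProjection s p) ^ 2)
        √(b ^ 2 - dist p (orthogonalProjection s p) ^ 2) ∩ s := by
  have hh : 0 ≤ dist p (orthogonalProjection s p) := dist_nonneg
  ext y
  simp only [closedAnnulus, Set.mem_inter_iff, Set.mem_ofPred_eq, SetLike.mem_coe]
  refine and_congr_left fun hy => ?_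
  have hpyth := dist_sq_eq_dist_orthogonalProjection_sq_add_sq p hy
  exact and_congr (Real.le_iff_sqrt_sq_sub_sq_le ha dist_nonneg dist_nonneg hpyth)
    (Real.le_iff_le_sqrt_sq_sub_sq (hh.trans hb) dist_nonneg dist_nonneg
      (pow_le_pow_left₀ hh hb 2) hpyth)

end EuclideanGeometry

theorem stmt4_general (d : ℕ) (r w : ℝ) (hwr : w ≤ r)
    (H : AffineSubspace ℝ (EuclideanSpace ℝ (Fin d)))
    (hne : ({x : EuclideanSpace ℝ (Fin d) | r - w ≤ ‖x‖ ∧ ‖x‖ ≤ r}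
        ∩ (H : Set (EuclideanSpace ℝ (Fin d)))).Nonempty) :
    ∃ c ∈ (H : Set (EuclideanSpace ℝ (Fin d))), ∃ rs ws : ℝ, 0 ≤ ws ∧ ws ≤ rs ∧
      {x : EuclideanSpace ℝ (Fin d) | r - w ≤ ‖x‖ ∧ ‖x‖ ≤ r}
          ∩ (H : Set (EuclideanSpace ℝ (Fin d)))
        = {y ∈ (H : Set (EuclideanSpace ℝ (Fin d))) | rs - ws ≤ dist y c ∧ dist y c ≤ rs} ∧
      rs * ws ≤ 2 * r * w := by
  obtain ⟨x₀, ⟨hx₀w, hx₀r⟩, hx₀H⟩ := hne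
  have : Nonempty H := ⟨⟨x₀, hx₀H⟩⟩
  set c : EuclideanSpace ℝ (Fin d) := ↑(orthogonalProjection H 0)
  set h := dist 0 c
  have hhr : h ≤ r := (dist_orthogonalProjection_le_dist_of_mem 0 hx₀H).trans
    (by rwa [dist_comm, dist_zero_right])
  have hshell : {x : EuclideanSpace ℝ (Fin d) | r - w ≤ ‖x‖ ∧ ‖x‖ ≤ r} =
      closedAnnulus 0 (r - w) r := by
    simp only [closedAnnulus, dist_zero_right]
  have hinner : r - w ≤ r := hx₀w.trans hx₀r
  refine ⟨c, orthogonalProjection_mem 0, √(r ^ 2 - h ^ 2),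
    √(r ^ 2 - h ^ 2) - √((r - w) ^ 2 - h ^ 2),
    sub_nonneg.2 (Real.sqrt_sq_sub_sq_le_sqrt_sq_sub_sq (by linarith) hinner),
    sub_le_self _ (Real.sqrt_nonneg _), ?_, ?_⟩
  · rw [hshell, closedAnnulus_inter_affineSubspace 0 (by linarith) hhr, sub_sub_cancel,
      Set.inter_comm]
    rfl
  · calc _ ≤ r ^ 2 - (r - w) ^ 2 :=
          Real.sqrt_mul_sub_sqrt_le (by linarith) hinner (pow_le_pow_left₀ dist_nonneg hhr 2)
      _ ≤ 2 * r * w := by nlinarith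

/-- The intersection of a spherical shell with a hyperplane is a lower-dimensional
spherical shell (a ball counting as a shell with \( w_* = r_* \), a point as \( r_* = w_* = 0 \)),
and its outer radius and thickness satisfy \( r_* w_* \le 2 r w \). -/
theorem stmt4 (d : ℕ) (r w : ℝ) (hw : 0 < w) (hwr : w ≤ r)
    (H : AffineSubspace ℝ (EuclideanSpace ℝ (Fin d)))
    (hH : Module.finrank ℝ H.direction = d - 1)
    (hne : ({x : EuclideanSpace ℝ (Fin d) | r - w ≤ ‖x‖ ∧ ‖x‖ ≤ r}
        ∩ (H : Set (EuclideanSpace ℝ (Fin d)))).Nonempty) :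
    ∃ c ∈ (H : Set (EuclideanSpace ℝ (Fin d))), ∃ rs ws : ℝ, 0 ≤ ws ∧ ws ≤ rs ∧
      {x : EuclideanSpace ℝ (Fin d) | r - w ≤ ‖x‖ ∧ ‖x‖ ≤ r}
          ∩ (H : Set (EuclideanSpace ℝ (Fin d)))
        = {y ∈ (H : Set (EuclideanSpace ℝ (Fin d))) | rs - ws ≤ dist y c ∧ dist y c ≤ rs} ∧
      rs * ws ≤ 2 * r * w :=
  stmt4_general d r w hwr H hne
end

section
/- Let Ω = {x ∈ R^d : r−w ≤ |x| ≤ r} with 0 < w ≤ r, let d ≥ 3, and let ω ∈ S^{d−1} and A ∈ R^d be fixed. Then the Lebesgue measure of the set {X ∈ Ω : |ω · (X − A)| ≤ h} is at most C(d) · w r^{d−2} h for a constant C(d) depending only on d. -/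
/-!
After rotating `ω` to the first basis vector, Fubini over the first coordinate `t` leaves
slices `{y ∈ ℝ^{d-1} : (r-w)² - t² ≤ ‖y‖² ≤ r² - t²}`. Such a slice lies in a shell
`b ≤ ‖y‖ ≤ c` with `b ≤ c ≤ r` and `c² - b² ≤ 2rw`, so its volume is at most
`(c^{d-1} - b^{d-1}) |B| ≤ (d-1) r^{d-3} (c² - b²) |B| ≤ 2(d-1) w r^{d-2} |B|` uniformly in `t`,
and only `t` in an interval of length `2h` contribute.
-/

open MeasureTheory Metric

open Module

theorem pow_sub_pow_le_mul_sq_sub_sq {b c r : ℝ} {n : ℕ} (hn : 2 ≤ n) (hb : 0 ≤ b)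
    (hbc : b ≤ c) (hcr : c ≤ r) :
    c ^ n - b ^ n ≤ n * r ^ (n - 2) * (c ^ 2 - b ^ 2) := by
  have hc : 0 ≤ c := hb.trans hbc
  have hr : 0 ≤ r := hc.trans hcr
  have hmean : c ^ n - b ^ n ≤ (c - b) * n * c ^ (n - 1) := (le_abs_self _).trans <| by
    simpa [abs_of_nonneg hb, abs_of_nonneg hc, abs_of_nonneg (sub_nonneg.2 hbc), hbc] using
      abs_pow_sub_pow_le c b n
  have hsplit : c ^ (n - 1) = c ^ (n - 2) * c := by
    rw [← pow_succ]; congr 1; omega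
  calc c ^ n - b ^ n ≤ n * c ^ (n - 2) * (c * (c - b)) := by rw [hsplit] at hmean; linarith
    _ ≤ n * r ^ (n - 2) * (c ^ 2 - b ^ 2) := by
      gcongr
      nlinarith

section AddHaar

variable {E : Type*} [NormedAddCommGroup E] [NormedSpace ℝ E] [MeasurableSpace E] [BorelSpace E]
  [FiniteDimensional ℝ E] (μ : Measure E) [μ.IsAddHaarMeasure]

theorem MeasureTheory.Measure.addHaar_closedBall_diff_ball [Nontrivial E] (x : E) {b c : ℝ}
    (hb : 0 ≤ b) (hbc : b ≤ c) :
    μ (closedBall x c \ ball x b) =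
      ENNReal.ofReal (c ^ finrank ℝ E - b ^ finrank ℝ E) * μ (ball 0 1) := by
  rw [measure_sdiff (ball_subset_closedBall.trans (closedBall_subset_closedBall hbc))
    measurableSet_ball.nullMeasurableSet measure_ball_lt_top.ne,
    Measure.addHaar_closedBall μ x (hb.trans hbc), Measure.addHaar_ball μ x hb, ← ENNReal.sub_mul
    (fun _ _ => measure_ball_lt_top.ne), ENNReal.ofReal_sub _ (by positivity)]

theorem MeasureTheory.Measure.addHaar_setOf_sq_norm_mem_Icc_le {α β r : ℝ} (hE : 2 ≤ finrank ℝ E)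
    (hαβ : α ≤ β) (hβr : β ≤ r ^ 2) (hr : 0 ≤ r) :
    μ {y | α ≤ ‖y‖ ^ 2 ∧ ‖y‖ ^ 2 ≤ β} ≤
      ENNReal.ofReal (finrank ℝ E * r ^ (finrank ℝ E - 2) * (β - α)) * μ (ball 0 1) := by
  have : Nontrivial E := Module.nontrivial_of_finrank_pos (by omega : 0 < finrank ℝ E)
  have hsub : {y : E | α ≤ ‖y‖ ^ 2 ∧ ‖y‖ ^ 2 ≤ β} ⊆ closedBall 0 √β \ ball 0 √α := by
    rintro y ⟨hαy, hyβ⟩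
    simp only [Set.mem_sdiff, mem_closedBall_zero_iff, mem_ball_zero_iff, not_lt]
    exact ⟨Real.le_sqrt_of_sq_le hyβ, Real.sqrt_le_left (norm_nonneg y) |>.2 hαy⟩
  have hsq : √β ^ 2 - √α ^ 2 ≤ β - α := by
    rw [Real.sq_sqrt', Real.sq_sqrt']
    grind
  have hβ : √β ≤ r := by rw [Real.sqrt_le_left hr]; exact hβr
  calc μ {y : E | α ≤ ‖y‖ ^ 2 ∧ ‖y‖ ^ 2 ≤ β} ≤ μ (closedBall 0 √β \ ball 0 √α) := measure_mono hsub
    _ = ENNReal.ofReal (√β ^ finrank ℝ E - √α ^ finrank ℝ E) * μ (ball 0 1) :=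
      Measure.addHaar_closedBall_diff_ball μ 0 (Real.sqrt_nonneg α) (Real.sqrt_le_sqrt hαβ)
    _ ≤ _ := by
      gcongr
      exact (pow_sub_pow_le_mul_sq_sub_sq hE (Real.sqrt_nonneg α) (Real.sqrt_le_sqrt hαβ) hβ).trans
        (by gcongr)

end AddHaar

theorem volume_setOf_norm_inner_eq_of_norm_eq {E : Type*} [NormedAddCommGroup E]
    [InnerProductSpace ℝ E] [FiniteDimensional ℝ E] [MeasurableSpace E] [BorelSpace E]
    (P : ℝ → ℝ → Prop) {ω e : E} (h : ‖e‖ = ‖ω‖) :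
    volume {X | P ‖X‖ (inner ℝ ω X)} = volume {X | P ‖X‖ (inner ℝ e X)} := by
  set R := Submodule.reflection (ℝ ∙ (e - ω))ᗮ
  have hpre : R ⁻¹' {X | P ‖X‖ (inner ℝ ω X)} = {X | P ‖X‖ (inner ℝ e X)} := by
    ext X
    have hRe : R e = ω := Submodule.reflection_sub h
    simp only [Set.mem_preimage, Set.mem_ofPred_eq, LinearIsometryEquiv.norm_map]
    rw [← hRe, LinearIsometryEquiv.inner_map_map]
  rw [← hpre, R.measurePreserving.measure_preimage_emb R.toHomeomorph.measurableEmbedding]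

theorem EuclideanSpace.volume_setOf_head_sq_norm (n : ℕ) (P : ℝ → ℝ → Prop) :
    volume {X : EuclideanSpace ℝ (Fin (n + 1)) | P (X 0) (‖X‖ ^ 2)} =
      volume {p : ℝ × EuclideanSpace ℝ (Fin n) | P p.1 (p.1 ^ 2 + ‖p.2‖ ^ 2)} := by
  let Φ : EuclideanSpace ℝ (Fin (n + 1)) ≃ᵐ ℝ × EuclideanSpace ℝ (Fin n) :=
    ((MeasurableEquiv.toLp 2 _).symm.trans (MeasurableEquiv.piFinSuccAbove (fun _ => ℝ) 0)).trans
      ((MeasurableEquiv.refl ℝ).prodCongr (MeasurableEquiv.toLp 2 _))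
  have hΦ : MeasurePreserving Φ :=
    ((MeasurePreserving.id volume).prod (PiLp.volume_preserving_toLp _)).comp <|
      (volume_preserving_piFinSuccAbove (fun _ => ℝ) 0).comp
        (EuclideanSpace.volume_preserving_symm_measurableEquiv_toLp _)
  have hpre : Φ ⁻¹' {p | P p.1 (p.1 ^ 2 + ‖p.2‖ ^ 2)} = {X | P (X 0) (‖X‖ ^ 2)} := by
    ext X
    simp [Φ, MeasurableEquiv.prodCongr, EuclideanSpace.norm_sq_eq, Fin.sum_univ_succ, Fin.tail]
  rw [← hpre, hΦ.measure_preimage_emb Φ.measurableEmbedding]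

theorem MeasureTheory.Measure.prod_apply_le_of_slice_le {α β : Type*} [MeasurableSpace α]
    [MeasurableSpace β] {μ : Measure α} {ν : Measure β} [SFinite ν] {s : Set (α × β)}
    (hs : MeasurableSet s) {I : Set α} (hsI : ∀ p ∈ s, p.1 ∈ I) {M : ENNReal}
    (hM : ∀ t ∈ I, ν (Prod.mk t ⁻¹' s) ≤ M) :
    μ.prod ν s ≤ M * μ I := by
  rw [Measure.prod_apply hs]
  refine (lintegral_mono fun t => ?_).trans (lintegral_indicator_const_le I M)
  by_cases ht : t ∈ I
  · simpa [ht] using hM t ht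
  · have : Prod.mk t ⁻¹' s = ∅ := Set.eq_empty_of_forall_notMem fun y hy => ht (hsI _ hy)
    simp [this]

theorem EuclideanSpace.volume_prod_shell_slab_le {n : ℕ} (hn : 2 ≤ n) {ρ r a h : ℝ}
    (hr : 0 ≤ r) (hρr : ρ ^ 2 ≤ r ^ 2) :
    volume {p : ℝ × EuclideanSpace ℝ (Fin n) |
        (ρ ^ 2 ≤ p.1 ^ 2 + ‖p.2‖ ^ 2 ∧ p.1 ^ 2 + ‖p.2‖ ^ 2 ≤ r ^ 2) ∧ |p.1 - a| ≤ h} ≤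
      ENNReal.ofReal (n * r ^ (n - 2) * (r ^ 2 - ρ ^ 2)) *
        volume (ball (0 : EuclideanSpace ℝ (Fin n)) 1) * volume (Set.Icc (a - h) (a + h)) := by
  have hq : Measurable fun p : ℝ × EuclideanSpace ℝ (Fin n) => p.1 ^ 2 + ‖p.2‖ ^ 2 := by fun_prop
  refine Measure.prod_apply_le_of_slice_le ?_ (fun p hp => ?_) fun t _ => ?_
  · have hslab : Measurable fun p : ℝ × EuclideanSpace ℝ (Fin n) => |p.1 - a| := by fun_prop
    exact ((measurableSet_le measurable_const hq).inter
      (measurableSet_le hq measurable_const)).inter (measurableSet_le hslab measurable_const)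
  · obtain ⟨h₁, h₂⟩ := abs_le.mp hp.2
    constructor <;> linarith
  · have hslice : Prod.mk t ⁻¹' {p : ℝ × EuclideanSpace ℝ (Fin n) |
          (ρ ^ 2 ≤ p.1 ^ 2 + ‖p.2‖ ^ 2 ∧ p.1 ^ 2 + ‖p.2‖ ^ 2 ≤ r ^ 2) ∧ |p.1 - a| ≤ h} ⊆
        {y | ρ ^ 2 - t ^ 2 ≤ ‖y‖ ^ 2 ∧ ‖y‖ ^ 2 ≤ r ^ 2 - t ^ 2} :=
      fun y ⟨⟨h₁, h₂⟩, _⟩ => ⟨by linarith, by linarith⟩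
    refine (measure_mono hslice).trans <| (Measure.addHaar_setOf_sq_norm_mem_Icc_le volume
      (by simpa using hn) (by linarith) (by nlinarith [sq_nonneg t]) hr).trans_eq ?_
    rw [finrank_euclideanSpace_fin, sub_sub_sub_cancel_right]

/-- The measure of the intersection of the shell `{r-w ≤ |x| ≤ r}` with a slab of
half-thickness `h` orthogonal to a unit vector `ω` through a point `A` is at most
`C(d) · w r^{d-2} h`. -/
theorem stmt5 (d : ℕ) (hd : 3 ≤ d) :
    ∃ C > (0:ℝ), ∀ (r w h : ℝ) (ω A : EuclideanSpace ℝ (Fin d)),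
      0 < w → w ≤ r → ‖ω‖ = 1 → 0 ≤ h →
      volume {X : EuclideanSpace ℝ (Fin d) |
          (r - w ≤ ‖X‖ ∧ ‖X‖ ≤ r) ∧ |(inner ℝ ω (X - A) : ℝ)| ≤ h}
        ≤ ENNReal.ofReal (C * w * r ^ (d-2) * h) := by
  obtain ⟨n, hn, rfl⟩ : ∃ n, 2 ≤ n ∧ d = n + 1 := ⟨d - 1, by omega, by omega⟩
  obtain ⟨K, hK, hκ⟩ : ∃ K > 0, volume (ball (0 : EuclideanSpace ℝ (Fin n)) 1) = .ofReal K :=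
    ⟨_, ENNReal.toReal_pos (measure_ball_pos _ _ one_pos).ne' measure_ball_lt_top.ne,
      (ENNReal.ofReal_toReal measure_ball_lt_top.ne).symm⟩
  refine ⟨4 * n * K, by positivity, fun r w h ω A hw hwr hω hh => ?_⟩
  have hr : 0 ≤ r := hw.le.trans hwr
  have hshell (ρ : ℝ) (hρ : 0 ≤ ρ) : (r - w ≤ ρ ∧ ρ ≤ r) ↔ (r - w) ^ 2 ≤ ρ ^ 2 ∧ ρ ^ 2 ≤ r ^ 2 := by
    rw [pow_le_pow_iff_left₀ (by linarith) hρ two_ne_zero, pow_le_pow_iff_left₀ hρ hr two_ne_zero]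
  let P (t q : ℝ) : Prop := ((r - w) ^ 2 ≤ q ∧ q ≤ r ^ 2) ∧ |t - inner ℝ ω A| ≤ h
  calc _ = volume {X : EuclideanSpace ℝ (Fin (n + 1)) | P (inner ℝ ω X) (‖X‖ ^ 2)} := by
        simp_rw [hshell _ (norm_nonneg _), inner_sub_right, P]
    _ = volume {X : EuclideanSpace ℝ (Fin (n + 1)) | P (X 0) (‖X‖ ^ 2)} := by
        rw [volume_setOf_norm_inner_eq_of_norm_eq (fun ρ s => P s (ρ ^ 2))
          (e := EuclideanSpace.single 0 1) (by simp [hω])]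
        simp [EuclideanSpace.inner_single_left]
    _ = volume {p : ℝ × EuclideanSpace ℝ (Fin n) | P p.1 (p.1 ^ 2 + ‖p.2‖ ^ 2)} :=
        EuclideanSpace.volume_setOf_head_sq_norm n P
    _ ≤ .ofReal (n * r ^ (n - 2) * (r ^ 2 - (r - w) ^ 2)) * .ofReal K *
          volume (Set.Icc (inner ℝ ω A - h) (inner ℝ ω A + h)) :=
        hκ ▸ EuclideanSpace.volume_prod_shell_slab_le hn hr (by nlinarith)
    _ ≤ .ofReal (4 * n * K * w * r ^ (n + 1 - 2) * h) := by
        have hgap : 0 ≤ n * r ^ (n - 2) * (r ^ 2 - (r - w) ^ 2) := by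
          have : 0 ≤ r ^ 2 - (r - w) ^ 2 := by nlinarith
          positivity
        rw [Real.volume_Icc, ← ENNReal.ofReal_mul hgap, ← ENNReal.ofReal_mul (by positivity)]
        apply ENNReal.ofReal_le_ofReal
        rw [show n + 1 - 2 = n - 2 + 1 by omega, pow_succ r (n - 2)]
        have hloss :=
          mul_nonneg (mul_nonneg (pow_nonneg hr (n - 2)) hK.le) (mul_nonneg hh (sq_nonneg w))
        nlinarith
end
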